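/- Let Y_v be a discrete random variable with values in I_v = {0_v, 1_v, …, d_v}, let J_v = I_v \ {0_v}, and X_{J_v} = (1(Y_v = j_v))_{j_v ∈ J_v} its binary expansion. Let Z be a discrete random vector. For J'_v ⊂ J_v and j_v ∈ J_v \ J'_v, the pair (X_{J'_v}, X_v^{j_v}) is independent of Z if and only if both X_{J'_v} ⫫ Z and X_v^{j_v} ⫫ Z. -/
import Mathlib

open Finset

open Classical in
/-- Probability of an event under a distribution `p` on a finite sample space. -/
noncomputable def Pr {Ω : Type*} [Fintype Ω] (p : Ω → ℝ) (φ : Ω → Prop) : ℝ :=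
  ∑ x ∈ Finset.univ.filter (fun x => φ x), p x

open Classical in
lemma Pr_eq_sum_ite {Ω : Type*} [Fintype Ω] (p : Ω → ℝ) (φ : Ω → Prop) :
    Pr p φ = ∑ x, if φ x then p x else 0 := by
  rw [Pr, Finset.sum_filter]

lemma Pr_congr {Ω : Type*} [Fintype Ω] (p : Ω → ℝ) {φ ψ : Ω → Prop}
    (h : ∀ x, φ x ↔ ψ x) : Pr p φ = Pr p ψ := by
  rw [Pr, Pr]
  congr 1
  ext x
  simp [h x]

lemma Pr_split {Ω : Type*} [Fintype Ω] (p : Ω → ℝ) (φ ψ : Ω → Prop) :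
    Pr p φ = Pr p (fun x => φ x ∧ ψ x) + Pr p (fun x => φ x ∧ ¬ ψ x) := by
  classical
  simp only [Pr_eq_sum_ite, ← Finset.sum_add_distrib]
  refine Finset.sum_congr rfl fun x _ => ?_
  by_cases h1 : φ x <;> by_cases h2 : ψ x <;> simp [h1, h2]

lemma Pr_of_empty {Ω : Type*} [Fintype Ω] (p : Ω → ℝ) {φ : Ω → Prop}
    (h : ∀ x, ¬ φ x) : Pr p φ = 0 := by
  simp only [Pr_eq_sum_ite]
  exact Finset.sum_eq_zero fun x _ => by simp [h x]

lemma Pr_true {Ω : Type*} [Fintype Ω] (p : Ω → ℝ) :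
    Pr p (fun _ => True) = ∑ x, p x := by
  simp [Pr_eq_sum_ite]

/-- let `Y_v` take values in `I_v` with baseline `z`, and let
`X^{j} = 1(Y_v = j)` for `j ∈ J_v = I_v \ {z}`. For `J'_v ⊂ J_v` and
`j₀ ∈ J_v \ J'_v`, the vector `(X_{J'_v}, X^{j₀})` is independent of a discrete
random vector `Z` if and only if both `X_{J'_v} ⫫ Z` and `X^{j₀} ⫫ Z`.
Here `q` is the joint distribution of `(Y_v, Z)` on `I × W`. -/
theorem stmt7 {I W : Type*} [Fintype I] [DecidableEq I] [Fintype W] [DecidableEq W]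
    (z : I) (q : I × W → ℝ) (hq : ∀ ω, 0 ≤ q ω) (hsum : ∑ ω, q ω = 1)
    (J' : Finset I) (hJ'z : z ∉ J') (hJ'sub : J' ⊂ Finset.univ.erase z)
    (j₀ : I) (hj₀z : j₀ ≠ z) (hj₀ : j₀ ∉ J') :
    (∀ (b : I → Bool) (w : W),
        Pr q (fun ω => ((∀ j ∈ J', (ω.1 = j ↔ b j = true)) ∧ (ω.1 = j₀ ↔ b j₀ = true))
            ∧ ω.2 = w) =
          Pr q (fun ω => (∀ j ∈ J', (ω.1 = j ↔ b j = true)) ∧ (ω.1 = j₀ ↔ b j₀ = true)) *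
            Pr q (fun ω => ω.2 = w)) ↔
      ((∀ (b : I → Bool) (w : W),
          Pr q (fun ω => (∀ j ∈ J', (ω.1 = j ↔ b j = true)) ∧ ω.2 = w) =
            Pr q (fun ω => ∀ j ∈ J', (ω.1 = j ↔ b j = true)) * Pr q (fun ω => ω.2 = w)) ∧
        (∀ (b₀ : Bool) (w : W),
          Pr q (fun ω => (ω.1 = j₀ ↔ b₀ = true) ∧ ω.2 = w) =
            Pr q (fun ω => (ω.1 = j₀ ↔ b₀ = true)) * Pr q (fun ω => ω.2 = w))) := by
  have hne : ∀ j ∈ J', j ≠ j₀ := fun j hj h => hj₀ (h ▸ hj)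
  have hforce : ∀ (x : I), x = j₀ → ∀ j ∈ J', ¬ (x = j) :=
    fun x hx j hj hxj => hne j hj (hxj.symm.trans hx)
  constructor
  · intro H
    have hXtrue : ∀ w : W,
        Pr q (fun ω => ω.1 = j₀ ∧ ω.2 = w) =
          Pr q (fun ω => ω.1 = j₀) * Pr q (fun ω => ω.2 = w) := by
      intro w
      have h := H (fun i => decide (i = j₀)) w
      have key : ∀ ω : I × W,
          ((∀ j ∈ J', (ω.1 = j ↔ (decide (j = j₀)) = true)) ∧
            (ω.1 = j₀ ↔ (decide (j₀ = j₀)) = true)) ↔ (ω.1 = j₀) := by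
        intro ω
        constructor
        · rintro ⟨_, h2⟩; simpa using h2
        · intro h1
          constructor
          · intro j hj
            simp only [decide_eq_true_eq]
            exact iff_of_false (hforce ω.1 h1 j hj) (hne j hj)
          · simpa using h1
      have e1 : ∀ ω : I × W,
          (((∀ j ∈ J', (ω.1 = j ↔ (decide (j = j₀)) = true)) ∧
            (ω.1 = j₀ ↔ (decide (j₀ = j₀)) = true)) ∧ ω.2 = w) ↔
          (ω.1 = j₀ ∧ ω.2 = w) := fun ω => and_congr_left' (key ω)
      rw [Pr_congr q e1, Pr_congr q key] at h
      exact h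
    refine ⟨?_, ?_⟩
    · -- J' marginal independence
      intro b w
      have h1 := H (fun i => if i = j₀ then true else b i) w
      have h2 := H (fun i => if i = j₀ then false else b i) w
      have key1 : ∀ ω : I × W,
          ((∀ j ∈ J', (ω.1 = j ↔ (if j = j₀ then true else b j) = true)) ∧
            (ω.1 = j₀ ↔ (if j₀ = j₀ then true else b j₀) = true)) ↔
          ((∀ j ∈ J', (ω.1 = j ↔ b j = true)) ∧ ω.1 = j₀) := by
        intro ω
        rw [if_pos rfl]
        constructor
        · rintro ⟨ha, hb⟩
          exact ⟨fun j hj => by have hx := ha j hj; rwa [if_neg (hne j hj)] at hx,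
            hb.mpr rfl⟩
        · rintro ⟨ha, hb⟩
          exact ⟨fun j hj => by rw [if_neg (hne j hj)]; exact ha j hj, by simp [hb]⟩
      have key2 : ∀ ω : I × W,
          ((∀ j ∈ J', (ω.1 = j ↔ (if j = j₀ then false else b j) = true)) ∧
            (ω.1 = j₀ ↔ (if j₀ = j₀ then false else b j₀) = true)) ↔
          ((∀ j ∈ J', (ω.1 = j ↔ b j = true)) ∧ ¬ (ω.1 = j₀)) := by
        intro ω
        rw [if_pos rfl]
        constructor
        · rintro ⟨ha, hb⟩
          exact ⟨fun j hj => by have hx := ha j hj; rwa [if_neg (hne j hj)] at hx,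
            fun h => by simpa using hb.mp h⟩
        · rintro ⟨ha, hb⟩
          exact ⟨fun j hj => by rw [if_neg (hne j hj)]; exact ha j hj,
            iff_of_false hb (by simp)⟩
      rw [Pr_congr q (fun ω => and_congr_left' (key1 ω)), Pr_congr q key1] at h1
      rw [Pr_congr q (fun ω => and_congr_left' (key2 ω)), Pr_congr q key2] at h2
      have split1 : Pr q (fun ω : I × W => (∀ j ∈ J', (ω.1 = j ↔ b j = true)) ∧ ω.2 = w) =
          Pr q (fun ω => ((∀ j ∈ J', (ω.1 = j ↔ b j = true)) ∧ ω.1 = j₀) ∧ ω.2 = w) +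
          Pr q (fun ω => ((∀ j ∈ J', (ω.1 = j ↔ b j = true)) ∧ ¬ (ω.1 = j₀)) ∧ ω.2 = w) := by
        rw [Pr_split q (fun ω : I × W => (∀ j ∈ J', (ω.1 = j ↔ b j = true)) ∧ ω.2 = w)
          (fun ω => ω.1 = j₀)]
        congr 1
        · exact Pr_congr q (fun ω => by tauto)
        · exact Pr_congr q (fun ω => by tauto)
      have split2 : Pr q (fun ω : I × W => ∀ j ∈ J', (ω.1 = j ↔ b j = true)) =
          Pr q (fun ω => (∀ j ∈ J', (ω.1 = j ↔ b j = true)) ∧ ω.1 = j₀) +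
          Pr q (fun ω => (∀ j ∈ J', (ω.1 = j ↔ b j = true)) ∧ ¬ (ω.1 = j₀)) :=
        Pr_split q _ _
      rw [split1, split2, h1, h2, add_mul]
    · -- j₀ marginal independence
      intro b₀ w
      cases b₀ with
      | true =>
        rw [Pr_congr q (fun ω : I × W => and_congr_left' (by simp : (ω.1 = j₀ ↔ true = true) ↔ ω.1 = j₀)),
          Pr_congr q (fun ω : I × W => (by simp : (ω.1 = j₀ ↔ true = true) ↔ ω.1 = j₀))]
        exact hXtrue w
      | false =>
        rw [Pr_congr q (fun ω : I × W => and_congr_left'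
            (by simp : (ω.1 = j₀ ↔ false = true) ↔ ¬ (ω.1 = j₀))),
          Pr_congr q (fun ω : I × W => (by simp : (ω.1 = j₀ ↔ false = true) ↔ ¬ (ω.1 = j₀)))]
        have s1 : Pr q (fun ω : I × W => ω.2 = w) =
            Pr q (fun ω => ω.1 = j₀ ∧ ω.2 = w) + Pr q (fun ω => ¬ (ω.1 = j₀) ∧ ω.2 = w) := by
          rw [Pr_split q (fun ω : I × W => ω.2 = w) (fun ω => ω.1 = j₀)]
          congr 1
          · exact Pr_congr q (fun ω => by tauto)
          · exact Pr_congr q (fun ω => by tauto)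
        have s2 : (1 : ℝ) = Pr q (fun ω : I × W => ω.1 = j₀) + Pr q (fun ω => ¬ (ω.1 = j₀)) := by
          have h := Pr_split q (fun _ : I × W => True) (fun ω => ω.1 = j₀)
          rw [Pr_true, hsum] at h
          rw [h]
          congr 1
          · exact Pr_congr q (fun ω => by tauto)
          · exact Pr_congr q (fun ω => by tauto)
        have t1 : Pr q (fun ω : I × W => ¬ (ω.1 = j₀)) = 1 - Pr q (fun ω => ω.1 = j₀) := by
          linarith [s2]
        have t2 : Pr q (fun ω : I × W => ¬ (ω.1 = j₀) ∧ ω.2 = w) =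
            Pr q (fun ω => ω.2 = w) - Pr q (fun ω => ω.1 = j₀ ∧ ω.2 = w) := by
          linarith [s1]
        rw [t1, t2, hXtrue w]
        ring
  · rintro ⟨hA, hX⟩ b w
    have hXtrue : ∀ w : W,
        Pr q (fun ω => ω.1 = j₀ ∧ ω.2 = w) =
          Pr q (fun ω => ω.1 = j₀) * Pr q (fun ω => ω.2 = w) := by
      intro w'
      have h := hX true w'
      rwa [Pr_congr q (fun ω : I × W => and_congr_left'
          (by simp : (ω.1 = j₀ ↔ true = true) ↔ ω.1 = j₀)),
        Pr_congr q (fun ω : I × W => (by simp : (ω.1 = j₀ ↔ true = true) ↔ ω.1 = j₀))] at h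
    by_cases hb0 : b j₀ = true
    · by_cases hex : ∃ j ∈ J', b j = true
      · obtain ⟨j, hj, hbj⟩ := hex
        have hempty' : ∀ ω : I × W,
            ¬ ((∀ j ∈ J', (ω.1 = j ↔ b j = true)) ∧ (ω.1 = j₀ ↔ b j₀ = true)) := by
          rintro ω ⟨ha, hb⟩
          exact hne j hj (((ha j hj).mpr hbj).symm.trans (hb.mpr hb0))
        have hempty : ∀ ω : I × W,
            ¬ (((∀ j ∈ J', (ω.1 = j ↔ b j = true)) ∧ (ω.1 = j₀ ↔ b j₀ = true)) ∧ ω.2 = w) :=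
          fun ω h => hempty' ω h.1
        rw [Pr_of_empty q hempty, Pr_of_empty q hempty', zero_mul]
      · push_neg at hex
        have hbf : ∀ j ∈ J', ¬ (b j = true) := hex
        have key : ∀ ω : I × W,
            ((∀ j ∈ J', (ω.1 = j ↔ b j = true)) ∧ (ω.1 = j₀ ↔ b j₀ = true)) ↔
            (ω.1 = j₀) := by
          intro ω
          constructor
          · rintro ⟨_, hb⟩; exact hb.mpr hb0
          · intro h1
            exact ⟨fun j hj => iff_of_false (hforce ω.1 h1 j hj) (hbf j hj),
              iff_of_true h1 hb0⟩
        rw [Pr_congr q (fun ω => and_congr_left' (key ω)), Pr_congr q key]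
        exact hXtrue w
    · by_cases hex : ∃ j ∈ J', b j = true
      · obtain ⟨j, hj, hbj⟩ := hex
        have key : ∀ ω : I × W,
            ((∀ j ∈ J', (ω.1 = j ↔ b j = true)) ∧ (ω.1 = j₀ ↔ b j₀ = true)) ↔
            (∀ j ∈ J', (ω.1 = j ↔ b j = true)) := by
          intro ω
          constructor
          · exact fun h => h.1
          · intro ha
            refine ⟨ha, iff_of_false (fun hj' => ?_) hb0⟩
            exact hne j hj (((ha j hj).mpr hbj).symm.trans hj')
        rw [Pr_congr q (fun ω => and_congr_left' (key ω)), Pr_congr q key]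
        exact hA b w
      · push_neg at hex
        have hbf : ∀ j ∈ J', ¬ (b j = true) := hex
        have hAj₀ : ∀ ω : I × W, ω.1 = j₀ → ∀ j ∈ J', (ω.1 = j ↔ b j = true) := by
          intro ω h1 j hj
          exact iff_of_false (hforce ω.1 h1 j hj) (hbf j hj)
        have key : ∀ ω : I × W,
            ((∀ j ∈ J', (ω.1 = j ↔ b j = true)) ∧ (ω.1 = j₀ ↔ b j₀ = true)) ↔
            ((∀ j ∈ J', (ω.1 = j ↔ b j = true)) ∧ ¬ (ω.1 = j₀)) := by
          intro ω
          constructor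
          · rintro ⟨ha, hb⟩; exact ⟨ha, fun h => hb0 (hb.mp h)⟩
          · rintro ⟨ha, hb⟩; exact ⟨ha, iff_of_false hb hb0⟩
        rw [Pr_congr q (fun ω => and_congr_left' (key ω)), Pr_congr q key]
        have split1 : Pr q (fun ω : I × W => (∀ j ∈ J', (ω.1 = j ↔ b j = true)) ∧ ω.2 = w) =
            Pr q (fun ω => ω.1 = j₀ ∧ ω.2 = w) +
            Pr q (fun ω => ((∀ j ∈ J', (ω.1 = j ↔ b j = true)) ∧ ¬ (ω.1 = j₀)) ∧ ω.2 = w) := by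
          rw [Pr_split q (fun ω : I × W => (∀ j ∈ J', (ω.1 = j ↔ b j = true)) ∧ ω.2 = w)
            (fun ω => ω.1 = j₀)]
          congr 1
          · refine Pr_congr q (fun ω => ?_)
            constructor
            · rintro ⟨⟨_, hc⟩, h1⟩; exact ⟨h1, hc⟩
            · rintro ⟨h1, hc⟩; exact ⟨⟨hAj₀ ω h1, hc⟩, h1⟩
          · exact Pr_congr q (fun ω => by tauto)
        have split2 : Pr q (fun ω : I × W => ∀ j ∈ J', (ω.1 = j ↔ b j = true)) =
            Pr q (fun ω => ω.1 = j₀) +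
            Pr q (fun ω => (∀ j ∈ J', (ω.1 = j ↔ b j = true)) ∧ ¬ (ω.1 = j₀)) := by
          rw [Pr_split q (fun ω : I × W => ∀ j ∈ J', (ω.1 = j ↔ b j = true))
            (fun ω => ω.1 = j₀)]
          congr 1
          refine Pr_congr q (fun ω => ?_)
          constructor
          · exact fun h => h.2
          · exact fun h1 => ⟨hAj₀ ω h1, h1⟩
        have hAw := hA b w
        have goal1 : Pr q (fun ω : I × W =>
            ((∀ j ∈ J', (ω.1 = j ↔ b j = true)) ∧ ¬ (ω.1 = j₀)) ∧ ω.2 = w) =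
            Pr q (fun ω : I × W => (∀ j ∈ J', (ω.1 = j ↔ b j = true)) ∧ ω.2 = w) -
            Pr q (fun ω => ω.1 = j₀ ∧ ω.2 = w) := by linarith [split1]
        have goal2 : Pr q (fun ω : I × W => (∀ j ∈ J', (ω.1 = j ↔ b j = true)) ∧ ¬ (ω.1 = j₀)) =
            Pr q (fun ω : I × W => ∀ j ∈ J', (ω.1 = j ↔ b j = true)) -
            Pr q (fun ω => ω.1 = j₀) := by linarith [split2]
        rw [goal1, goal2, hAw, hXtrue w]
        ring
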